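/- Let d ≥ 1 be an integer and let t_{-d} < t_{-d+1} < ⋯ < t_{2d+1} be strictly increasing real numbers. Let M_0 be the (2d+1)×(2d+1) matrix with entries M_0(δ, γ) := Δ[t_{γ:γ+d+1}] p_{d+1+δ} (rows δ = 0, …, 2d, columns γ = -d, …, d), and suppose the vector c = (c_{-d}, …, c_d) satisfies M_0 c = e_1 (where e_1 has 1 in the row δ = 0 and 0 elsewhere). Then for every δ = 0, …, 2d, the scaled Peano identity ∑_{γ=-d}^{d} c_γ · Δ[t_{γ:γ+d+1}] g_x = C(d+1+δ, δ) · (−x)^δ holds for every x ∈ ℝ, where g_x(t) := (t − x)^{d+1+δ} and C(d+1+δ, δ) is the binomial coefficient. -/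
import Mathlib


open MeasureTheory

/-- Divided difference `Δ[t_i, ..., t_j] h`, defined recursively:
`Δ[t_i] h = h (t i)` and
`Δ[t_{i:j}] h = (Δ[t_{i+1:j}] h - Δ[t_{i:j-1}] h) / (t j - t i)` for `i < j`. -/
noncomputable def dd (t : ℤ → ℝ) (h : ℝ → ℝ) (i j : ℤ) : ℝ :=
  if _hij : i < j then
    (dd t h (i + 1) j - dd t h i (j - 1)) / (t j - t i)
  else h (t i)
termination_by (j - i).toNat
decreasing_by
  · omega
  · omega

theorem dd_of_lt (t : ℤ → ℝ) (h : ℝ → ℝ) {i j : ℤ} (hij : i < j) :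
    dd t h i j = (dd t h (i + 1) j - dd t h i (j - 1)) / (t j - t i) := by
  rw [dd]; exact dif_pos hij

theorem dd_of_ge (t : ℤ → ℝ) (h : ℝ → ℝ) {i j : ℤ} (hij : ¬ i < j) :
    dd t h i j = h (t i) := by
  rw [dd]; exact dif_neg hij

theorem dd_smul (t : ℤ → ℝ) (a : ℝ) (h : ℝ → ℝ) (i j : ℤ) :
    dd t (fun u => a * h u) i j = a * dd t h i j := by
  by_cases hij : i < j
  · rw [dd_of_lt _ _ hij, dd_of_lt _ _ hij,
      dd_smul t a h (i+1) j, dd_smul t a h i (j-1)]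
    ring
  · rw [dd_of_ge _ _ hij, dd_of_ge _ _ hij]
termination_by (j - i).toNat
decreasing_by
  · omega
  · omega

theorem dd_sum {α : Type*} (t : ℤ → ℝ) (s : Finset α) (f : α → ℝ → ℝ) (i j : ℤ) :
    dd t (fun u => ∑ m ∈ s, f m u) i j = ∑ m ∈ s, dd t (f m) i j := by
  by_cases hij : i < j
  · rw [dd_of_lt _ _ hij, dd_sum t s f (i+1) j, dd_sum t s f i (j-1),
      ← Finset.sum_sub_distrib, Finset.sum_div]
    exact Finset.sum_congr rfl fun m _ => (dd_of_lt _ _ hij).symm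
  · rw [dd_of_ge _ _ hij]
    exact Finset.sum_congr rfl fun m _ => (dd_of_ge _ _ hij).symm
termination_by (j - i).toNat
decreasing_by
  · omega
  · omega

theorem dd_const (t : ℤ → ℝ) (a : ℝ) (i j : ℤ) (hij : i < j) :
    dd t (fun _ => a) i j = 0 := by
  rw [dd_of_lt _ _ hij]
  by_cases h1 : i + 1 < j
  · rw [dd_const t a (i+1) j h1, dd_const t a i (j-1) (by omega)]
    simp
  · rw [dd_of_ge _ _ (by omega), dd_of_ge _ _ (by omega)]
    simp
termination_by (j - i).toNat
decreasing_by
  · omega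
  · omega

theorem dd_mulX (t : ℤ → ℝ) (h : ℝ → ℝ) (i j : ℤ) (hij : i < j)
    (hm : ∀ a b : ℤ, i ≤ a → a < b → b ≤ j → t a < t b) :
    dd t (fun u => u * h u) i j = t i * dd t h i j + dd t h (i + 1) j := by
  have hT : t i < t j := hm i j le_rfl hij le_rfl
  by_cases h1 : i + 1 < j
  · have hT' : t (i + 1) < t j := hm (i+1) j (by omega) h1 le_rfl
    rw [dd_of_lt _ _ hij, dd_of_lt t h hij,
      dd_mulX t h (i+1) j h1 (fun a b ha hab hb => hm a b (by omega) hab hb),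
      dd_mulX t h i (j-1) (by omega) (fun a b ha hab hb => hm a b ha hab (by omega)),
      dd_of_lt t h h1]
    have e1 : t j - t i ≠ 0 := by linarith
    have e2 : t j - t (i + 1) ≠ 0 := by linarith
    field_simp
    ring
  · have hj : j = i + 1 := by omega
    subst hj
    rw [dd_of_lt _ _ hij, dd_of_lt t h hij,
      dd_of_ge _ _ (by omega), dd_of_ge _ _ (by omega),
      dd_of_ge t h (show ¬ i + 1 < i + 1 by omega),
      dd_of_ge t h (show ¬ i < i + 1 - 1 by omega)]
    have e1 : t (i + 1) - t i ≠ 0 := by linarith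
    field_simp
    ring
termination_by (j - i).toNat
decreasing_by
  · omega
  · omega

theorem dd_pow_eq_zero (t : ℤ → ℝ) (m : ℕ) :
    ∀ i j : ℤ, (m : ℤ) < j - i →
    (∀ a b : ℤ, i ≤ a → a < b → b ≤ j → t a < t b) →
    dd t (fun u => u ^ m) i j = 0 := by
  induction m with
  | zero =>
    intro i j hij hm
    rw [show (fun u : ℝ => u ^ 0) = fun _ => (1:ℝ) from by funext u; simp]
    exact dd_const t 1 i j (by omega)
  | succ m ih =>
    intro i j hij hm
    rw [show (fun u : ℝ => u ^ (m+1)) = fun u => u * u ^ m from by funext u; ring,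
      dd_mulX t _ i j (by omega) hm,
      ih i j (by omega) hm,
      ih (i+1) j (by omega) (fun a b ha hab hb => hm a b (by omega) hab hb)]
    ring

theorem tmono (d : ℕ) (t : ℤ → ℝ)
    (ht : ∀ i : ℤ, -(d : ℤ) ≤ i → i < 2 * d + 1 → t i < t (i + 1)) :
    ∀ a b : ℤ, -(d : ℤ) ≤ a → a < b → b ≤ 2 * d + 1 → t a < t b := by
  have key : ∀ n : ℕ, ∀ a : ℤ, -(d : ℤ) ≤ a → a + 1 + n ≤ 2 * d + 1 →
      t a < t (a + 1 + n) := by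
    intro n
    induction n with
    | zero =>
      intro a ha hb
      have := ht a ha (by omega)
      simpa using this
    | succ n ih =>
      intro a ha hb
      have h1 : t a < t (a + 1 + n) := ih a ha (by omega)
      have h2 : t (a + 1 + n) < t (a + 1 + n + 1) := ht (a + 1 + n) (by omega) (by omega)
      have : a + 1 + (n + 1 : ℕ) = a + 1 + n + 1 := by push_cast; ring
      rw [this]
      linarith
  intro a b ha hab hb
  have hb' : b = a + 1 + ((b - a - 1).toNat : ℤ) := by omega
  rw [hb']
  exact key _ a ha (by omega)

/-- If `c` solves `M₀ c = e₁`, where `M₀(δ, γ) = Δ[t_{γ:γ+d+1}] (·)^{d+1+δ}`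
(rows `δ = 0..2d`, columns `γ = -d..d`), then for every `δ = 0..2d` and every `x ∈ ℝ` the
scaled Peano identity holds:
`∑_γ c_γ · Δ[t_{γ:γ+d+1}] (· - x)^{d+1+δ} = C(d+1+δ, δ) · (-x)^δ`. -/
theorem stmt14 (d : ℕ) (hd : 1 ≤ d) (t : ℤ → ℝ)
    (ht : ∀ i : ℤ, -(d : ℤ) ≤ i → i < 2 * d + 1 → t i < t (i + 1))
    (M : Matrix (Fin (2 * d + 1)) (Fin (2 * d + 1)) ℝ)
    (hM : ∀ δ γ : Fin (2 * d + 1),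
      M δ γ = dd t (fun u => u ^ (d + 1 + (δ : ℕ)))
        (((γ : ℕ) : ℤ) - d) ((((γ : ℕ) : ℤ) - d) + (d + 1)))
    (e₁ : Fin (2 * d + 1) → ℝ) (he₁ : ∀ δ, e₁ δ = if δ = 0 then 1 else 0)
    (c : Fin (2 * d + 1) → ℝ) (hc : M.mulVec c = e₁) :
    ∀ (δ : Fin (2 * d + 1)) (x : ℝ),
      ∑ γ : Fin (2 * d + 1), c γ *
        dd t (fun u => (u - x) ^ (d + 1 + (δ : ℕ)))
          (((γ : ℕ) : ℤ) - d) ((((γ : ℕ) : ℤ) - d) + (d + 1)) =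
      ((d + 1 + (δ : ℕ)).choose (δ : ℕ) : ℝ) * (-x) ^ (δ : ℕ) := by
  intro δ x
  set n : ℕ := d + 1 + (δ : ℕ) with hn
  set coeff : ℕ → ℝ := fun m => (n.choose m : ℝ) * (-x) ^ (n - m) with hcoeff
  have hδlt : (δ : ℕ) < 2 * d + 1 := δ.isLt
  -- monotonicity on each window
  have hmono : ∀ γ : Fin (2 * d + 1), ∀ a b : ℤ,
      ((γ : ℕ) : ℤ) - d ≤ a → a < b → b ≤ ((γ : ℕ) : ℤ) - d + (d + 1) → t a < t b := by
    intro γ a b ha hab hb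
    have hγ : (γ : ℕ) < 2 * d + 1 := γ.isLt
    exact tmono d t ht a b (by omega) hab (by omega)
  -- binomial expansion of the function
  have hfun : (fun u : ℝ => (u - x) ^ n) =
      fun u => ∑ m ∈ Finset.range (n + 1), coeff m * u ^ m := by
    funext u
    rw [sub_eq_add_neg, add_pow]
    exact Finset.sum_congr rfl fun m _ => by rw [hcoeff]; ring
  -- expand each divided difference
  have hg : ∀ γ : Fin (2 * d + 1),
      dd t (fun u => (u - x) ^ n) (((γ : ℕ) : ℤ) - d) (((γ : ℕ) : ℤ) - d + (d + 1)) =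
      ∑ m ∈ Finset.range (n + 1), coeff m *
        dd t (fun u => u ^ m) (((γ : ℕ) : ℤ) - d) (((γ : ℕ) : ℤ) - d + (d + 1)) := by
    intro γ
    rw [hfun, dd_sum]
    exact Finset.sum_congr rfl fun m _ => dd_smul t (coeff m) (fun u => u ^ m) _ _
  -- the inner column sums
  have hS : ∀ m ∈ Finset.range (n + 1),
      (∑ γ : Fin (2 * d + 1), c γ *
        dd t (fun u => u ^ m) (((γ : ℕ) : ℤ) - d) (((γ : ℕ) : ℤ) - d + (d + 1))) =
      if m = d + 1 then 1 else 0 := by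
    intro m hm
    rw [Finset.mem_range] at hm
    by_cases hmd : m ≤ d
    · have : ∀ γ : Fin (2 * d + 1),
          dd t (fun u => u ^ m) (((γ : ℕ) : ℤ) - d) (((γ : ℕ) : ℤ) - d + (d + 1)) = 0 := by
        intro γ
        exact dd_pow_eq_zero t m _ _ (by omega) (hmono γ)
      rw [if_neg (by omega)]
      simp [this]
    · have hδ'lt : m - (d + 1) < 2 * d + 1 := by omega
      set δ' : Fin (2 * d + 1) := ⟨m - (d + 1), hδ'lt⟩ with hδ'
      have hexp : d + 1 + (δ' : ℕ) = m := by simp [hδ']; omega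
      have hddM : ∀ γ : Fin (2 * d + 1),
          dd t (fun u => u ^ m) (((γ : ℕ) : ℤ) - d) (((γ : ℕ) : ℤ) - d + (d + 1)) = M δ' γ := by
        intro γ
        rw [hM δ' γ, hexp]
      have : (∑ γ : Fin (2 * d + 1), c γ *
          dd t (fun u => u ^ m) (((γ : ℕ) : ℤ) - d) (((γ : ℕ) : ℤ) - d + (d + 1))) =
          M.mulVec c δ' := by
        rw [Matrix.mulVec, dotProduct]
        exact Finset.sum_congr rfl fun γ _ => by rw [hddM γ, mul_comm]
      rw [this, hc, he₁]
      by_cases hm1 : m = d + 1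
      · rw [if_pos hm1, if_pos (by simp [hδ', hm1, Fin.ext_iff])]
      · rw [if_neg hm1, if_neg (by simp [hδ', Fin.ext_iff]; omega)]
  calc ∑ γ : Fin (2 * d + 1), c γ *
        dd t (fun u => (u - x) ^ n) (((γ : ℕ) : ℤ) - d) (((γ : ℕ) : ℤ) - d + (d + 1))
      = ∑ γ : Fin (2 * d + 1), ∑ m ∈ Finset.range (n + 1), coeff m *
          (c γ * dd t (fun u => u ^ m) (((γ : ℕ) : ℤ) - d) (((γ : ℕ) : ℤ) - d + (d + 1))) := by
        refine Finset.sum_congr rfl fun γ _ => ?_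
        rw [hg γ, Finset.mul_sum]
        exact Finset.sum_congr rfl fun m _ => by ring
    _ = ∑ m ∈ Finset.range (n + 1), coeff m *
          (∑ γ : Fin (2 * d + 1), c γ *
            dd t (fun u => u ^ m) (((γ : ℕ) : ℤ) - d) (((γ : ℕ) : ℤ) - d + (d + 1))) := by
        rw [Finset.sum_comm]
        exact Finset.sum_congr rfl fun m _ => by rw [Finset.mul_sum]
    _ = ∑ m ∈ Finset.range (n + 1), (if m = d + 1 then coeff m else 0) := by
        refine Finset.sum_congr rfl fun m hm => ?_
        rw [hS m hm]
        by_cases h : m = d + 1 <;> simp [h]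
    _ = coeff (d + 1) := by
        rw [Finset.sum_ite_eq' (Finset.range (n + 1)) (d + 1) coeff,
          if_pos (Finset.mem_range.mpr (by omega))]
    _ = ((d + 1 + (δ : ℕ)).choose (δ : ℕ) : ℝ) * (-x) ^ (δ : ℕ) := by
        simp only [hcoeff]
        have h1 : n - (d + 1) = (δ : ℕ) := by omega
        have h2 : n.choose (d + 1) = n.choose (δ : ℕ) := by
          rw [show d + 1 = n - (δ : ℕ) from by omega, Nat.choose_symm (by omega)]
        rw [h1, h2, hn]
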